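/- arXiv:1512.03812 — 5 statements merged into one kernel-verified Lean document; each statement's English description precedes it below -/
import Mathlib

section
/- Let A and B be elements of a Banach algebra. Then the leap-frog (Strang) composition Δ(h) = exp((h/2)B)·exp(hA)·exp((h/2)B) is a second-order approximation of the exact exponential: ‖Δ(h) − exp(h(A+B))‖ = O(h³) as h → 0, i.e., there exist constants C > 0 and δ > 0 such that ‖Δ(h) − exp(h(A+B))‖ ≤ C·h³ for all 0 < h < δ. -/
/-!
Each exponential factor agrees with its second-order Taylor polynomial `1 + x + x²/2` up to
`O(‖x‖³)` (Taylor's formula for the analytic map `exp`), and such errors survive multiplication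
by bounded factors. For the Taylor polynomials themselves, with `a = hA` and `b = (h/2)B`, the
part of `T(b) T(a) T(b)` of degree at most two in `h` is `1 + (a + 2b) + (a + 2b)²/2`, which is
`T(h(A + B))`; what remains is `h³` times a polynomial in `h`.
-/

open NormedSpace Asymptotics Filter Topology

namespace Asymptotics

theorem IsBigO.smul_const {α 𝕜 E : Type*} [NormedField 𝕜] [SeminormedAddCommGroup E]
    [NormedSpace 𝕜 E] {l : Filter α} {k g : α → 𝕜} (hk : k =O[l] g) (x : E) :
    (fun t => k t • x) =O[l] g := by
  simpa using hk.smul (isBigO_const_const x (one_ne_zero (α := 𝕜)) l)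

theorem IsBigO.mul_sub_mul {α R : Type*} [SeminormedRing R] {l : Filter α}
    {f₁ f₂ p₁ p₂ : α → R} {g : α → ℝ} (h₁ : (fun t => f₁ t - p₁ t) =O[l] g)
    (h₂ : (fun t => f₂ t - p₂ t) =O[l] g) (hf₂ : f₂ =O[l] fun _ => (1 : ℝ))
    (hp₁ : p₁ =O[l] fun _ => (1 : ℝ)) :
    (fun t => f₁ t * f₂ t - p₁ t * p₂ t) =O[l] g := by
  have h₁' := h₁.mul hf₂
  have h₂' := hp₁.mul h₂
  simp only [mul_one, one_mul] at h₁' h₂'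
  refine (h₁'.add h₂').congr_left fun t => ?_
  noncomm_ring

theorem IsBigO.exists_norm_le_mul_pow {E : Type*} [SeminormedAddCommGroup E] {f : ℝ → E}
    {n : ℕ} (hf : f =O[𝓝 0] fun h => h ^ n) :
    ∃ C > (0 : ℝ), ∃ δ > (0 : ℝ), ∀ h : ℝ, 0 < h → h < δ → ‖f h‖ ≤ C * h ^ n := by
  obtain ⟨C, hC, hCf⟩ := hf.exists_pos
  obtain ⟨δ, hδ, hδf⟩ := Metric.eventually_nhds_iff.1 hCf.bound
  refine ⟨C, hC, δ, hδ, fun h h₀ hδh => ?_⟩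
  have hbound := hδf (by rwa [Real.dist_eq, sub_zero, abs_of_pos h₀])
  rwa [norm_pow, Real.norm_eq_abs, abs_of_pos h₀] at hbound

end Asymptotics

section ExpTaylor

variable {𝒜 : Type*} [NormedRing 𝒜] [NormedAlgebra ℝ 𝒜]

noncomputable def expTaylor₂ (x : 𝒜) : 𝒜 := 1 + x + (2 : ℝ)⁻¹ • (x * x)

theorem expSeries_partialSum_three (x : 𝒜) :
    (expSeries ℝ 𝒜).partialSum 3 x = expTaylor₂ x := by
  simp [FormalMultilinearSeries.partialSum, Finset.sum_range_succ, expSeries_apply_eq,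
    expTaylor₂, pow_two]

theorem tendsto_expTaylor₂_comp_of_tendsto_zero {α : Type*} {l : Filter α} {u : α → 𝒜}
    (hu : Tendsto u l (𝓝 0)) : Tendsto (fun t => expTaylor₂ (u t)) l (𝓝 1) := by
  have hcont : Continuous (expTaylor₂ : 𝒜 → 𝒜) := by unfold expTaylor₂; fun_prop
  have hlim := (hcont.tendsto 0).comp hu
  rwa [show expTaylor₂ (0 : 𝒜) = 1 by simp [expTaylor₂]] at hlim

variable [CompleteSpace 𝒜]

theorem tendsto_exp_comp_of_tendsto_zero {α : Type*} {l : Filter α} {u : α → 𝒜}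
    (hu : Tendsto u l (𝓝 0)) : Tendsto (fun t => exp (u t)) l (𝓝 1) := by
  have hlim := (exp_analytic (𝕂 := ℝ) (0 : 𝒜)).continuousAt.tendsto.comp hu
  rwa [exp_zero] at hlim

theorem exp_sub_expTaylor₂_isBigO :
    (fun x : 𝒜 => exp x - expTaylor₂ x) =O[𝓝 0] fun x => ‖x‖ ^ 3 := by
  simpa [expSeries_partialSum_three] using
    (exp_hasFPowerSeriesAt_zero (𝕂 := ℝ) (𝔸 := 𝒜)).isBigO_sub_partialSum_pow 3

theorem exp_sub_expTaylor₂_comp_isBigO {α : Type*} {l : Filter α} {u : α → 𝒜} {g : α → ℝ}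
    (hu : u =O[l] g) (hg : Tendsto g l (𝓝 0)) :
    (fun t => exp (u t) - expTaylor₂ (u t)) =O[l] fun t => g t ^ 3 :=
  (exp_sub_expTaylor₂_isBigO.comp_tendsto (hu.trans_tendsto hg)).trans (hu.norm_left.pow 3)

end ExpTaylor

section Leapfrog

variable {𝒜 : Type*} [NormedRing 𝒜] [NormedAlgebra ℝ 𝒜]

noncomputable def leapfrogCubicFactor (A B : 𝒜) (h : ℝ) : 𝒜 :=
  (1/4 : ℝ) • (A*A*B) + (1/8 : ℝ) • (A*B*B) + (1/4 : ℝ) • (B*A*A)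
      + (1/4 : ℝ) • (B*A*B) + (1/8 : ℝ) • (B*B*A) + (1/8 : ℝ) • (B*B*B)
    + h • ((1/16 : ℝ) • (A*A*B*B) + (1/8 : ℝ) • (B*A*A*B) + (1/16 : ℝ) • (B*A*B*B)
      + (1/16 : ℝ) • (B*B*A*A) + (1/16 : ℝ) • (B*B*A*B) + (1/64 : ℝ) • (B*B*B*B))
    + h ^ 2 • ((1/32 : ℝ) • (B*A*A*B*B) + (1/32 : ℝ) • (B*B*A*A*B)
      + (1/64 : ℝ) • (B*B*A*B*B))
    + h ^ 3 • (1/128 : ℝ) • (B*B*A*A*B*B)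

theorem leapfrog_expTaylor₂_sub (A B : 𝒜) (h : ℝ) :
    expTaylor₂ ((h / 2) • B) * expTaylor₂ (h • A) * expTaylor₂ ((h / 2) • B)
      - expTaylor₂ (h • (A + B)) = h ^ 3 • leapfrogCubicFactor A B h := by
  simp only [expTaylor₂, leapfrogCubicFactor, mul_add, add_mul, smul_mul_assoc, mul_smul_comm,
    smul_smul, smul_add, mul_one, one_mul, mul_assoc]
  module

theorem leapfrog_expTaylor₂_sub_isBigO (A B : 𝒜) :
    (fun h : ℝ => expTaylor₂ ((h / 2) • B) * expTaylor₂ (h • A) * expTaylor₂ ((h / 2) • B)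
      - expTaylor₂ (h • (A + B))) =O[𝓝 0] fun h => h ^ 3 := by
  have hQ : Continuous (leapfrogCubicFactor A B) := by unfold leapfrogCubicFactor; fun_prop
  simpa only [leapfrog_expTaylor₂_sub, smul_eq_mul, mul_one] using
    (isBigO_refl (fun h : ℝ => h ^ 3) (𝓝 0)).smul ((hQ.tendsto 0).isBigO_one (F := ℝ))

end Leapfrog

/-- The leap-frog (Strang) composition `Δ(h) = exp((h/2)B)·exp(hA)·exp((h/2)B)` is a
second-order approximation of `exp(h(A+B))`: the error is `O(h³)` as `h → 0`. -/
theorem leapfrog_second_order {𝒜 : Type*} [NormedRing 𝒜] [NormedAlgebra ℝ 𝒜]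
    [CompleteSpace 𝒜] (A B : 𝒜) :
    ∃ C > (0 : ℝ), ∃ δ > (0 : ℝ), ∀ h : ℝ, 0 < h → h < δ →
      ‖exp ((h / 2) • B) * exp (h • A) * exp ((h / 2) • B)
          - exp (h • (A + B))‖ ≤ C * h ^ 3 := by
  have hid : (fun h : ℝ => h) =O[𝓝 0] fun h => h := isBigO_refl _ _
  have hid₀ : Tendsto (fun h : ℝ => h) (𝓝 0) (𝓝 0) := tendsto_id
  have ha := hid.smul_const A
  have hb := ((hid.const_mul_left 2⁻¹).congr_left fun h => inv_mul_eq_div 2 h).smul_const B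
  have hc := hid.smul_const (A + B)
  have ha₀ := ha.trans_tendsto hid₀
  have hb₀ := hb.trans_tendsto hid₀
  have hTb := tendsto_expTaylor₂_comp_of_tendsto_zero hb₀
  have hba := (exp_sub_expTaylor₂_comp_isBigO hb hid₀).mul_sub_mul
    (exp_sub_expTaylor₂_comp_isBigO ha hid₀)
    ((tendsto_exp_comp_of_tendsto_zero ha₀).isBigO_one (F := ℝ)) (hTb.isBigO_one (F := ℝ))
  have hbab := hba.mul_sub_mul (exp_sub_expTaylor₂_comp_isBigO hb hid₀)
    ((tendsto_exp_comp_of_tendsto_zero hb₀).isBigO_one (F := ℝ))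
    ((hTb.mul (tendsto_expTaylor₂_comp_of_tendsto_zero ha₀)).isBigO_one (F := ℝ))
  refine IsBigO.exists_norm_le_mul_pow (((hbab.add (leapfrog_expTaylor₂_sub_isBigO A B)).sub
    (exp_sub_expTaylor₂_comp_isBigO hc hid₀)).congr_left fun h => ?_)
  abel
end

section
/- Let A and B be elements of a Banach algebra. Then the 5-stage composition Δ₅(h) = exp((h/6)B)·exp((h/2)A)·exp((2h/3)B)·exp((h/2)A)·exp((h/6)B) is a second-order approximation of the exact exponential: ‖Δ₅(h) − exp(h(A+B))‖ = O(h³) as h → 0. -/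
/-!
The error `Δ₅(h) - exp (h • (A + B))` is analytic in `h`, so it is `O(h³)` once its derivatives
of order `0, 1, 2` vanish at `h = 0`. For a product `∏ᵢ exp (t • Xᵢ)` these derivatives are `1`,
`∑ᵢ Xᵢ` and `∑ᵢ Xᵢ² + 2 ∑_{i<j} Xᵢ Xⱼ`. Because the coefficients of `Δ₅` are palindromic,
`∑_{i<j} Xᵢ Xⱼ = ∑_{i<j} Xⱼ Xᵢ`, so they match `1`, `A + B`, `(A + B)²` for `exp (t • (A + B))`.
-/

open NormedSpace Filter Topology Asymptotics

section Taylor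

variable {𝕜 E : Type*} [NontriviallyNormedField 𝕜] [CharZero 𝕜]
  [NormedAddCommGroup E] [NormedSpace 𝕜 E] [CompleteSpace E]

theorem AnalyticAt.isBigO_sub_pow_of_iteratedDeriv_eq {f g : 𝕜 → E} {z₀ : 𝕜} {n : ℕ}
    (hf : AnalyticAt 𝕜 f z₀) (hg : AnalyticAt 𝕜 g z₀)
    (h : ∀ i < n, iteratedDeriv i f z₀ = iteratedDeriv i g z₀) :
    (f - g) =O[𝓝 z₀] fun z => (z - z₀) ^ n := by
  have hfg : AnalyticAt 𝕜 (f - g) z₀ := hf.sub hg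
  have hvanish : ∀ i < n, iteratedDeriv i (f - g) z₀ = 0 := fun i hi => by
    rw [iteratedDeriv_sub hf.contDiffAt hg.contDiffAt, h i hi, sub_self]
  obtain ⟨q, hq, hfq⟩ := (natCast_le_analyticOrderAt hfg).1
    ((natCast_le_analyticOrderAt_iff_iteratedDeriv_eq_zero hfg).2 hvanish)
  refine EventuallyEq.trans_isBigO (f₂ := fun z => (z - z₀) ^ n • q z) hfq ?_
  simpa using (isBigO_refl (fun z => (z - z₀) ^ n) (𝓝 z₀)).smul
    (hq.continuousAt.tendsto.isBigO_one 𝕜)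

end Taylor

theorem exists_pos_bound_of_isBigO_pow {E : Type*} [SeminormedAddCommGroup E] {f : ℝ → E}
    {n : ℕ} (hf : f =O[𝓝 0] fun h => h ^ n) :
    ∃ C > 0, ∃ δ > 0, ∀ h : ℝ, 0 < h → h < δ → ‖f h‖ ≤ C * h ^ n := by
  obtain ⟨C, hC, hfC⟩ := hf.exists_pos
  obtain ⟨δ, hδ, hbound⟩ := Metric.eventually_nhds_iff.1 hfC.bound
  refine ⟨C, hC, δ, hδ, fun h h0 hhδ => ?_⟩
  have := hbound (by rwa [Real.dist_0_eq_abs, abs_of_pos h0])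
  rwa [norm_pow, Real.norm_of_nonneg h0.le] at this

section ExpProduct

variable {𝕂 𝔸 : Type*} [RCLike 𝕂] [NormedRing 𝔸] [NormedAlgebra 𝕂 𝔸]

noncomputable def expSmulProd (L : List 𝔸) (t : 𝕂) : 𝔸 :=
  (L.map fun X => exp (t • X)).prod

@[simp]
theorem expSmulProd_zero (L : List 𝔸) : expSmulProd L (0 : 𝕂) = 1 := by
  simp [expSmulProd]

variable [CompleteSpace 𝔸]

theorem analyticAt_exp_smul (X : 𝔸) (t : 𝕂) : AnalyticAt 𝕂 (fun s : 𝕂 => exp (s • X)) t :=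
  AnalyticAt.comp (g := exp) (f := (· • X)) (exp_analytic _) (analyticAt_id.smul analyticAt_const)

theorem analyticAt_expSmulProd (L : List 𝔸) (t : 𝕂) : AnalyticAt 𝕂 (expSmulProd L) t := by
  induction L with
  | nil => exact analyticAt_const
  | cons X L ih => exact (analyticAt_exp_smul X t).mul ih

theorem deriv_expSmulProd_cons (X : 𝔸) (L : List 𝔸) :
    deriv (expSmulProd (X :: L)) =
      fun t : 𝕂 => X * exp (t • X) * expSmulProd L t + exp (t • X) * deriv (expSmulProd L) t :=
  funext fun t => ((hasDerivAt_exp_smul_const' X t).mul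
    (analyticAt_expSmulProd L t).differentiableAt.hasDerivAt).deriv

theorem deriv_expSmulProd_zero (L : List 𝔸) : deriv (expSmulProd L) (0 : 𝕂) = L.sum := by
  induction L with
  | nil => exact deriv_const (0 : 𝕂) (1 : 𝔸)
  | cons X L ih => simp [deriv_expSmulProd_cons, ih]

theorem deriv_deriv_expSmulProd_cons_zero (X : 𝔸) (L : List 𝔸) :
    deriv (deriv (expSmulProd (X :: L))) (0 : 𝕂) =
      X * X + 2 • (X * L.sum) + deriv (deriv (expSmulProd L)) (0 : 𝕂) := by
  have hP := (analyticAt_expSmulProd L (0 : 𝕂)).differentiableAt.hasDerivAt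
  have hP' := (analyticAt_expSmulProd L (0 : 𝕂)).deriv.differentiableAt.hasDerivAt
  have hE := hasDerivAt_exp_smul_const' (𝕂 := 𝕂) X 0
  rw [deriv_expSmulProd_cons, (((hE.const_mul X).fun_mul hP).fun_add (hE.fun_mul hP')).deriv]
  simp only [zero_smul, exp_zero, expSmulProd_zero, deriv_expSmulProd_zero, one_mul, mul_one]
  abel

end ExpProduct

/-- The 5-stage composition
`Δ₅(h) = exp((h/6)B)·exp((h/2)A)·exp((2h/3)B)·exp((h/2)A)·exp((h/6)B)` is a second-order
approximation of `exp(h(A+B))`: the error is `O(h³)` as `h → 0`. -/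
theorem five_stage_second_order {𝒜 : Type*} [NormedRing 𝒜] [NormedAlgebra ℝ 𝒜]
    [CompleteSpace 𝒜] (A B : 𝒜) :
    ∃ C > (0 : ℝ), ∃ δ > (0 : ℝ), ∀ h : ℝ, 0 < h → h < δ →
      ‖exp ((h / 6) • B) * exp ((h / 2) • A) * exp ((2 * h / 3) • B) *
            exp ((h / 2) • A) * exp ((h / 6) • B)
          - exp (h • (A + B))‖ ≤ C * h ^ 3 := by
  let L : List 𝒜 := [(6⁻¹ : ℝ) • B, (2⁻¹ : ℝ) • A, (2 / 3 : ℝ) • B, (2⁻¹ : ℝ) • A, (6⁻¹ : ℝ) • B]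
  have hjet : ∀ i < 3, iteratedDeriv i (expSmulProd L) (0 : ℝ) =
      iteratedDeriv i (expSmulProd [A + B]) (0 : ℝ) := by
    intro i hi
    interval_cases i
    · simp
    · simp only [iteratedDeriv_one, deriv_expSmulProd_zero, L, List.sum_cons, List.sum_nil]
      module
    · simp only [iteratedDeriv_succ, iteratedDeriv_zero, deriv_deriv_expSmulProd_cons_zero,
        L, List.sum_cons, List.sum_nil, mul_add, add_mul, smul_mul_assoc, mul_smul_comm, smul_add]
      module
  have hO := (analyticAt_expSmulProd L (0 : ℝ)).isBigO_sub_pow_of_iteratedDeriv_eq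
    (analyticAt_expSmulProd [A + B] 0) hjet
  simp only [sub_zero] at hO
  obtain ⟨C, hC, δ, hδ, hbound⟩ := exists_pos_bound_of_isBigO_pow hO
  refine ⟨C, hC, δ, hδ, fun h h0 hhδ => le_of_eq_of_le ?_ (hbound h h0 hhδ)⟩
  simp only [expSmulProd, L, List.map_cons, List.map_nil, List.prod_cons, List.prod_nil, mul_one,
    smul_smul, mul_assoc, Pi.sub_apply]
  ring_nf
end

section
/- Let A and B be elements of a Banach algebra and fix h ∈ ℝ. Then the M-fold nested leap-frog product converges to the exact exponential with second-order rate in 1/M: there exists a constant C (depending on A, B and h) such that for every positive integer M, ‖( exp((h/(2M))B)·exp((h/M)A)·exp((h/(2M))B) )^M − exp(h(A+B))‖ ≤ C/M². -/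
/-!
Split one step of size `τ = h / M` into the symmetric factor `p = exp(τB/2) exp(τA) exp(τB/2)`
and the exact factor `e = exp(τ(A + B))`, so that `e ^ M = exp(h(A + B))`.

*Local error.* Comparing with quadratic Taylor polynomials gives the second-order
Baker–Campbell–Hausdorff formula `exp x exp y = exp(x + y) + [x, y]/2 + O(τ³)`. Applied twice,
to `(x, y) = (τB/2, τA)` and to `(τB/2 + τA, τB/2)`, the two commutator terms cancel, because
`[x, y] + [x + y, x] = 0`; hence `p - e = O(τ³) = O(M⁻³)`.

*Stability.* `1 + ‖z - 1‖` is submultiplicative and `1 + ‖exp z - 1‖ ≤ exp ‖z‖`, so all powers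
`p ^ k`, `e ^ k` with `k ≤ M` stay bounded uniformly in `M`. Telescoping
`p ^ M - e ^ M = ∑ p ^ k (p - e) e ^ (M - 1 - k)` then loses one factor `M`: the global error is
`O(M · M⁻³) = O(M⁻²)`.
-/

open NormedSpace Filter Topology Asymptotics Finset Nat

section NormedRing
variable {R : Type*} [NormedRing R]

theorem one_add_norm_mul_sub_one_le (x y : R) :
    1 + ‖x * y - 1‖ ≤ (1 + ‖x - 1‖) * (1 + ‖y - 1‖) := by
  have hxy : x * y - 1 = (x - 1) + (y - 1) + (x - 1) * (y - 1) := by noncomm_ring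
  have := norm_add₃_le (a := x - 1) (b := y - 1) (c := (x - 1) * (y - 1))
  rw [hxy]
  nlinarith [norm_mul_le (x - 1) (y - 1)]

theorem one_add_norm_pow_sub_one_le (x : R) (n : ℕ) :
    1 + ‖x ^ n - 1‖ ≤ (1 + ‖x - 1‖) ^ n := by
  induction n with
  | zero => simp
  | succ n ih =>
    calc 1 + ‖x ^ (n + 1) - 1‖ ≤ (1 + ‖x ^ n - 1‖) * (1 + ‖x - 1‖) := by
          rw [pow_succ]; exact one_add_norm_mul_sub_one_le _ _
      _ ≤ (1 + ‖x - 1‖) ^ n * (1 + ‖x - 1‖) := by gcongr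
      _ = (1 + ‖x - 1‖) ^ (n + 1) := (pow_succ _ _).symm

theorem norm_pow_le_of_one_add_norm_sub_one_le_exp {x : R} {n : ℕ} {r s : ℝ}
    (hx : 1 + ‖x - 1‖ ≤ Real.exp r) (hn : n * r ≤ s) : ‖x ^ n‖ ≤ ‖(1 : R)‖ + Real.exp s := by
  calc ‖x ^ n‖ ≤ ‖(1 : R)‖ + ‖x ^ n - 1‖ := by
        simpa using norm_add_le (1 : R) (x ^ n - 1)
    _ ≤ ‖(1 : R)‖ + (1 + ‖x - 1‖) ^ n := by linarith [one_add_norm_pow_sub_one_le x n]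
    _ ≤ ‖(1 : R)‖ + Real.exp r ^ n := by gcongr
    _ ≤ ‖(1 : R)‖ + Real.exp s := by rw [← Real.exp_nat_mul]; gcongr

theorem pow_sub_pow_eq_sum (p e : R) (n : ℕ) :
    p ^ n - e ^ n = ∑ k ∈ range n, p ^ k * (p - e) * e ^ (n - 1 - k) := by
  induction n with
  | zero => simp
  | succ n ih =>
    have hexp : ∀ k, n + 1 - 1 - (k + 1) = n - 1 - k := by omega
    simp only [sum_range_succ', hexp, pow_succ' p, mul_assoc p, ← mul_sum, ← ih]
    simp only [pow_zero, one_mul, Nat.add_sub_cancel, Nat.sub_zero, pow_succ' e]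
    noncomm_ring

theorem norm_pow_sub_pow_le {p e : R} {n : ℕ} {C : ℝ} (hp : ∀ k < n, ‖p ^ k‖ ≤ C)
    (he : ∀ k < n, ‖e ^ k‖ ≤ C) : ‖p ^ n - e ^ n‖ ≤ n * C ^ 2 * ‖p - e‖ := by
  rw [pow_sub_pow_eq_sum]
  calc ‖∑ k ∈ range n, p ^ k * (p - e) * e ^ (n - 1 - k)‖
      ≤ ∑ k ∈ range n, ‖p ^ k * (p - e) * e ^ (n - 1 - k)‖ := norm_sum_le _ _
    _ ≤ ∑ _k ∈ range n, C * ‖p - e‖ * C := sum_le_sum fun k hk => by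
      have hk := mem_range.1 hk
      have hC : 0 ≤ C := (norm_nonneg _).trans (hp k hk)
      refine norm_mul₃_le.trans ?_
      gcongr
      exacts [hp k hk, he _ (by omega)]
    _ = n * C ^ 2 * ‖p - e‖ := by simp only [sum_const, card_range, nsmul_eq_mul]; ring

end NormedRing

section Exponential
variable {𝒜 : Type*} [NormedRing 𝒜] [NormedAlgebra ℝ 𝒜] [CompleteSpace 𝒜]

theorem one_add_norm_exp_sub_one_le (x : 𝒜) : 1 + ‖exp x - 1‖ ≤ Real.exp ‖x‖ := by
  have hx := (exp_series_hasSum_exp' (𝕂 := ℝ) x).sub (hasSum_ite_eq 0 (1 : 𝒜))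
  have hr := (exp_series_hasSum_exp' (𝕂 := ℝ) ‖x‖).sub (hasSum_ite_eq 0 (1 : ℝ))
  rw [← Real.exp_eq_exp_ℝ] at hr
  suffices ‖exp x - 1‖ ≤ Real.exp ‖x‖ - 1 by linarith
  refine hx.norm_le_of_bounded hr fun n => ?_
  rcases n with _ | n
  · simp
  · simpa [norm_smul] using mul_le_mul_of_nonneg_left (norm_pow_le' x n.succ_pos) (by positivity)

theorem exp_pow_eq_exp_natCast_smul (x : 𝒜) (n : ℕ) : exp x ^ n = exp ((n : ℝ) • x) := by
  let : NormedAlgebra ℚ 𝒜 := .restrictScalars ℚ ℝ 𝒜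
  rw [← exp_nsmul, Nat.cast_smul_eq_nsmul]

variable {α : Type*} {l : Filter α} {x y : α → 𝒜} {g : α → ℝ}

theorem isBigO_exp_sub_sum_range (hx : Tendsto x l (𝓝 0)) (n : ℕ) :
    (fun t => exp (x t) - ∑ k ∈ range n, (k !⁻¹ : ℝ) • x t ^ k) =O[l] fun t => ‖x t‖ ^ n := by
  have := (exp_hasFPowerSeriesAt_zero (𝕂 := ℝ) (𝔸 := 𝒜)).isBigO_sub_partialSum_pow n
  simpa [Function.comp_def, FormalMultilinearSeries.partialSum, expSeries_apply_eq]
    using this.comp_tendsto hx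

theorem isBigO_exp_sub_one (hx : x =O[l] g) (hg : Tendsto g l (𝓝 0)) :
    (fun t => exp (x t) - 1) =O[l] g := by
  simpa using (isBigO_exp_sub_sum_range (hx.trans_tendsto hg) 1).trans (hx.norm_left.pow 1)

theorem isBigO_exp_sub_quadratic (hx : x =O[l] g) (hg : Tendsto g l (𝓝 0)) :
    (fun t => exp (x t) - (1 + x t + (2⁻¹ : ℝ) • (x t * x t))) =O[l] fun t => g t ^ 3 := by
  have := (isBigO_exp_sub_sum_range (hx.trans_tendsto hg) 3).trans (hx.norm_left.pow 3)
  simpa [sum_range_succ, ← sq, add_assoc] using this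

theorem tendsto_exp_of_tendsto_zero (hx : Tendsto x l (𝓝 0)) :
    Tendsto (fun t => exp (x t)) l (𝓝 1) := by
  simpa [Function.comp_def] using
    (exp_analytic (𝕂 := ℝ) (0 : 𝒜)).continuousAt.tendsto.comp hx

theorem isBigO_exp_mul_exp_sub_exp_add (hx : x =O[l] g) (hy : y =O[l] g)
    (hg : Tendsto g l (𝓝 0)) :
    (fun t => exp (x t) * exp (y t) - exp (x t + y t) - (2⁻¹ : ℝ) • (x t * y t - y t * x t))
      =O[l] fun t => g t ^ 3 := by
  set q : 𝒜 → 𝒜 := fun z => 1 + z + (2⁻¹ : ℝ) • (z * z)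
  have hx0 := hx.trans_tendsto hg
  have hg1 : g =O[l] fun _ => (1 : ℝ) := hg.isBigO_one ℝ
  have hqx : (fun t => q (x t)) =O[l] fun _ => (1 : ℝ) := by
    refine Tendsto.isBigO_one ℝ (c := (1 : 𝒜)) ?_
    simpa [q] using (hx0.const_add 1).add ((hx0.mul hx0).const_smul (2⁻¹ : ℝ))
  have h₁ : (fun t => (exp (x t) - q (x t)) * exp (y t)) =O[l] fun t => g t ^ 3 := by
    simpa using (isBigO_exp_sub_quadratic hx hg).mul
      ((tendsto_exp_of_tendsto_zero (hy.trans_tendsto hg)).isBigO_one ℝ)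
  have h₂ : (fun t => q (x t) * (exp (y t) - q (y t))) =O[l] fun t => g t ^ 3 := by
    simpa using hqx.mul (isBigO_exp_sub_quadratic hy hg)
  have h₃ : (fun t => x t * y t * y t + x t * x t * y t) =O[l] fun t => g t ^ 3 := by
    simpa [pow_three, mul_assoc] using ((hx.mul hy).mul hy).add ((hx.mul hx).mul hy)
  have h₄ : (fun t => x t * x t * y t * y t) =O[l] fun t => g t ^ 3 := by
    simpa [pow_three, mul_assoc] using (((hx.mul hx).mul hy).mul (hy.trans hg1))
  have key : ∀ t, exp (x t) * exp (y t) - exp (x t + y t) - (2⁻¹ : ℝ) • (x t * y t - y t * x t)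
      = (exp (x t) - q (x t)) * exp (y t) + q (x t) * (exp (y t) - q (y t))
        - (exp (x t + y t) - q (x t + y t))
        + ((2⁻¹ : ℝ) • (x t * y t * y t + x t * x t * y t)
          + (4⁻¹ : ℝ) • (x t * x t * y t * y t)) := by
    intro t
    simp only [q, mul_add, add_mul, mul_sub, sub_mul, mul_one, one_mul, smul_mul_assoc,
      mul_smul_comm, smul_smul, smul_add, smul_sub, mul_assoc]
    module
  simp_rw [key]
  exact ((h₁.add h₂).sub (isBigO_exp_sub_quadratic (hx.add hy) hg)).add
    ((h₃.const_smul_left (2⁻¹ : ℝ)).add (h₄.const_smul_left (4⁻¹ : ℝ)))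

theorem isBigO_exp_mul_exp_mul_exp_sub_exp (hx : x =O[l] g) (hy : y =O[l] g)
    (hg : Tendsto g l (𝓝 0)) :
    (fun t => exp (x t) * exp (y t) * exp (x t) - exp (x t + y t + x t))
      =O[l] fun t => g t ^ 3 := by
  have h₁ : (fun t => (exp (x t) * exp (y t) - exp (x t + y t)
      - (2⁻¹ : ℝ) • (x t * y t - y t * x t)) * exp (x t)) =O[l] fun t => g t ^ 3 := by
    simpa using (isBigO_exp_mul_exp_sub_exp_add hx hy hg).mul
      ((tendsto_exp_of_tendsto_zero (hx.trans_tendsto hg)).isBigO_one ℝ)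
  have h₂ := isBigO_exp_mul_exp_sub_exp_add (hx.add hy) hx hg
  have h₃ : (fun t => (2⁻¹ : ℝ) • (x t * y t - y t * x t) * (exp (x t) - 1)) =O[l]
      fun t => g t ^ 3 := by
    simpa [pow_three, mul_assoc] using
      ((((hx.mul hy).sub (hy.mul hx)).const_smul_left (2⁻¹ : ℝ)).mul (isBigO_exp_sub_one hx hg))
  refine ((h₁.add h₂).add h₃).congr (fun t => ?_) (fun t => by simp)
  simp only [smul_sub, sub_mul, mul_sub, add_mul, mul_add, mul_one, smul_mul_assoc]
  module

theorem norm_pow_sub_pow_exp_mul_exp_mul_exp_le {a b : 𝒜} {n : ℕ} {r : ℝ}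
    (hr : n * (2 * ‖a‖ + ‖b‖) ≤ r) :
    ‖(exp a * exp b * exp a) ^ n - exp (a + b + a) ^ n‖
      ≤ n * (‖(1 : 𝒜)‖ + Real.exp r) ^ 2 * ‖exp a * exp b * exp a - exp (a + b + a)‖ := by
  have hp : 1 + ‖exp a * exp b * exp a - 1‖ ≤ Real.exp (2 * ‖a‖ + ‖b‖) :=
    calc 1 + ‖exp a * exp b * exp a - 1‖
        ≤ (1 + ‖exp a - 1‖) * (1 + ‖exp b - 1‖) * (1 + ‖exp a - 1‖) :=
          (one_add_norm_mul_sub_one_le _ _).trans (by gcongr; exact one_add_norm_mul_sub_one_le _ _)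
      _ ≤ Real.exp ‖a‖ * Real.exp ‖b‖ * Real.exp ‖a‖ := by
          gcongr <;> exact one_add_norm_exp_sub_one_le _
      _ = Real.exp (2 * ‖a‖ + ‖b‖) := by rw [← Real.exp_add, ← Real.exp_add]; ring_nf
  have he : 1 + ‖exp (a + b + a) - 1‖ ≤ Real.exp (2 * ‖a‖ + ‖b‖) :=
    (one_add_norm_exp_sub_one_le _).trans <| Real.exp_le_exp.2 <| norm_add₃_le.trans_eq (by ring)
  have hk : ∀ k < n, k * (2 * ‖a‖ + ‖b‖) ≤ r := fun k hk =>
    le_trans (by gcongr) hr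
  exact norm_pow_sub_pow_le (fun k hk' => norm_pow_le_of_one_add_norm_sub_one_le_exp hp (hk k hk'))
    (fun k hk' => norm_pow_le_of_one_add_norm_sub_one_le_exp he (hk k hk'))

theorem norm_leapfrog_pow_sub_exp_le (A B : 𝒜) (h : ℝ) {M : ℕ} (hM : 0 < M) :
    ‖(exp ((h / (2 * (M : ℝ))) • B) * exp ((h / (M : ℝ)) • A) * exp ((h / (2 * (M : ℝ))) • B)) ^ M
        - exp (h • (A + B))‖
      ≤ (‖(1 : 𝒜)‖ + Real.exp (|h| * (‖A‖ + ‖B‖))) ^ 2 *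
        (M * ‖exp ((h / (2 * (M : ℝ))) • B) * exp ((h / (M : ℝ)) • A)
            * exp ((h / (2 * (M : ℝ))) • B)
          - exp ((h / (2 * (M : ℝ))) • B + (h / (M : ℝ)) • A + (h / (2 * (M : ℝ))) • B)‖) := by
  have hM : (0 : ℝ) < M := Nat.cast_pos.2 hM
  have hexp : exp ((h / (2 * (M : ℝ))) • B + (h / (M : ℝ)) • A + (h / (2 * (M : ℝ))) • B) ^ M
      = exp (h • (A + B)) := by
    rw [exp_pow_eq_exp_natCast_smul]
    congr 1
    simp only [smul_add, smul_smul]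
    field_simp
    module
  have hstep : (M : ℝ) * (2 * ‖(h / (2 * (M : ℝ))) • B‖ + ‖(h / (M : ℝ)) • A‖)
      = |h| * (‖A‖ + ‖B‖) := by
    simp only [norm_smul, Real.norm_eq_abs, abs_div, abs_mul, abs_two, Nat.abs_cast]
    field_simp
    ring
  rw [← hexp, mul_left_comm, ← mul_assoc]
  exact norm_pow_sub_pow_exp_mul_exp_mul_exp_le hstep.le

end Exponential

section Rate
variable {E : Type*} [NormedAddCommGroup E]

theorem isBigO_div_natCast_smul [NormedSpace ℝ E] (c : ℝ) (v : E) :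
    (fun M : ℕ => (c / M) • v) =O[atTop] fun M => (M : ℝ)⁻¹ :=
  (((isBigO_refl (fun M : ℕ => (M : ℝ)⁻¹) atTop).const_mul_left c).smul
    (isBigO_const_one ℝ v atTop)).congr (fun _ => rfl) fun _ => by simp

theorem exists_forall_norm_le_div_sq_of_isBigO {f : ℕ → E}
    (hf : f =O[atTop] fun M => (M : ℝ)⁻¹ ^ 2) :
    ∃ C : ℝ, ∀ M : ℕ, 0 < M → ‖f M‖ ≤ C / (M : ℝ) ^ 2 := by
  obtain ⟨C, hC⟩ := isBigO_principal.1 <| hf.nat_of_atTop (l := 𝓟 (Set.Ioi 0)) <|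
    eventually_principal.2 fun M (hM : 0 < M) h0 => absurd h0 (by positivity)
  exact ⟨C, fun M hM => (hC M hM).trans_eq (by simp [div_eq_mul_inv])⟩

end Rate

/-- For fixed `h`, the `M`-fold nested leap-frog product converges to `exp(h(A+B))` with
second-order rate in `1/M`. -/
theorem nested_leapfrog_rate {𝒜 : Type*} [NormedRing 𝒜] [NormedAlgebra ℝ 𝒜]
    [CompleteSpace 𝒜] (A B : 𝒜) (h : ℝ) :
    ∃ C : ℝ, ∀ M : ℕ, 0 < M →
      ‖(exp ((h / (2 * (M : ℝ))) • B) * exp ((h / (M : ℝ)) • A) *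
            exp ((h / (2 * (M : ℝ))) • B)) ^ M
          - exp (h • (A + B))‖ ≤ C / (M : ℝ) ^ 2 := by
  have hx : (fun M : ℕ => (h / (2 * (M : ℝ))) • B) =O[atTop] fun M => (M : ℝ)⁻¹ := by
    simpa only [div_mul_eq_div_div] using isBigO_div_natCast_smul (h / 2) B
  have hlocal := isBigO_exp_mul_exp_mul_exp_sub_exp hx (isBigO_div_natCast_smul h A)
    tendsto_inv_atTop_nhds_zero_nat
  have hglobal := (eventually_gt_atTop 0).mono fun M hM => norm_leapfrog_pow_sub_exp_le A B h hM
  refine exists_forall_norm_le_div_sq_of_isBigO ((IsBigO.of_norm_eventuallyLE hglobal).trans ?_)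
  refine (((isBigO_refl (fun M : ℕ => (M : ℝ)) atTop).mul hlocal.norm_left).const_mul_left _
    ).congr' .rfl ?_
  filter_upwards [eventually_gt_atTop 0] with M hM
  have hM : (M : ℝ) ≠ 0 := Nat.cast_ne_zero.2 hM.ne'
  field_simp
end

section
/- Let A, B₁ and B₂ be elements of a Banach algebra. Then the nested (multirate) leap-frog scheme Δ̂(h) = exp((h/2)B₂)·( exp((h/(2M))B₁)·exp((h/M)A)·exp((h/(2M))B₁) )^M·exp((h/2)B₂) is second-order accurate uniformly in the number of inner steps: there exists a constant C (depending only on A, B₁, B₂) such that for all 0 < h ≤ 1 and all positive integers M, ‖Δ̂(h) − exp(h(A+B₁+B₂))‖ ≤ C·h³. -/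
/-!
The Strang splitting `exp (τ/2 • B) * exp (τ • A) * exp (τ/2 • B)` and `exp (τ • (A + B))` have
the same Taylor expansion `1 + τ (A + B) + τ² (A + B)² / 2` up to `O(τ³)`: multiplying out
second-order expansions of the three factors reproduces it. Continuity upgrades this local
estimate near `τ = 0` to a bound `c τ³` on all of `(0, 1]`.

With `τ = h / M`, telescoping `Sᴹ - Tᴹ` gives `‖Sᴹ - Tᴹ‖ ≤ M Kᴹ ‖S - T‖` for `‖S‖, ‖T‖ ≤ K`,
and `K = e^{τ (‖A‖ + ‖B₁‖)}` works, so `M` local errors of size `c (h / M)³` add up to a global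
error `≤ c e^{‖A‖ + ‖B₁‖} h³ / M²`. The outer Strang step with `A + B₁` and `B₂` adds one more local
error `O(h³)`.

Bounding powers by powers of norms needs `‖1‖ = 1`. In general one passes to the left regular
representation `𝒜 →ₐ[ℝ] (𝒜 →L[ℝ] 𝒜)`, a continuous algebra embedding with `‖x‖ ≤ ‖1‖ ‖L_x‖`.
-/

open NormedSpace Asymptotics Filter Topology Set

lemma isBigO_principal_Ioc_of_isBigO_nhds_zero {E : Type*} [SeminormedAddGroup E] {f : ℝ → E}
    {k : ℕ} (hf : Continuous f) (h : f =O[𝓝 0] fun τ => τ ^ k) :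
    f =O[𝓟 (Ioc 0 1)] fun τ => τ ^ k := by
  obtain ⟨c, hc⟩ := h.bound
  obtain ⟨ε, hε, hball⟩ := Metric.eventually_nhds_iff_ball.1 hc
  have hnear : f =O[𝓟 (Metric.ball 0 ε)] fun τ => τ ^ k :=
    (isBigOWith_principal.2 hball).isBigO
  have hfar : f =O[𝓟 (Icc ε 1)] fun τ => τ ^ k :=
    (hf.continuousOn.isBigO_principal isCompact_Icc (c := (1 : ℝ)) (by norm_num)).trans
      ((continuous_pow k).continuousOn.isBigO_rev_principal isCompact_Icc
        (fun τ hτ => pow_ne_zero k (hε.trans_le hτ.1).ne') (1 : ℝ))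
  refine (hnear.sup hfar).mono ?_
  rw [sup_principal, principal_mono]
  rintro τ ⟨hτ₀, hτ₁⟩
  rcases lt_or_ge τ ε with hτε | hετ
  · exact Or.inl (by simpa [abs_of_pos hτ₀] using hτε)
  · exact Or.inr ⟨hετ, hτ₁⟩

lemma norm_pow_sub_pow_le_s6 {R : Type*} [NormedRing R] [NormOneClass R] {s t : R} {K : ℝ}
    (hK : 1 ≤ K) (hs : ‖s‖ ≤ K) (ht : ‖t‖ ≤ K) (n : ℕ) :
    ‖s ^ n - t ^ n‖ ≤ n * K ^ n * ‖s - t‖ := by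
  induction n with
  | zero => simp
  | succ n ih =>
    have hsplit : s ^ (n + 1) - t ^ (n + 1) = s * (s ^ n - t ^ n) + (s - t) * t ^ n := by
      simp only [pow_succ', mul_sub, sub_mul]
      abel
    have htn : ‖t ^ n‖ ≤ K ^ (n + 1) :=
      (norm_pow_le t n).trans ((pow_le_pow_left₀ (norm_nonneg t) ht n).trans
        (pow_le_pow_right₀ hK n.le_succ))
    calc ‖s ^ (n + 1) - t ^ (n + 1)‖
        ≤ K * (n * K ^ n * ‖s - t‖) + ‖s - t‖ * K ^ (n + 1) := by
          rw [hsplit]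
          refine (norm_add_le _ _).trans (add_le_add ?_ ?_) <;>
            refine (norm_mul_le _ _).trans ?_ <;> gcongr
      _ = (n + 1 : ℕ) * K ^ (n + 1) * ‖s - t‖ := by push_cast; ring

section

variable {𝒜 : Type*} [NormedRing 𝒜] [NormedAlgebra ℝ 𝒜]

def HasSecondOrderExpansion (f : ℝ → 𝒜) (a₁ a₂ : 𝒜) : Prop :=
  (fun τ : ℝ => f τ - (1 + τ • a₁ + τ ^ 2 • a₂)) =O[𝓝 0] fun τ => τ ^ 3

lemma quadratic_isBigO_one (a₁ a₂ : 𝒜) :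
    (fun τ : ℝ => 1 + τ • a₁ + τ ^ 2 • a₂) =O[𝓝 0] fun _ => (1 : ℝ) :=
  (Continuous.tendsto (by fun_prop) 0).isBigO_one ℝ

namespace HasSecondOrderExpansion

variable {f g : ℝ → 𝒜} {a₁ a₂ b₁ b₂ : 𝒜}

lemma isBigO_one (hf : HasSecondOrderExpansion f a₁ a₂) : f =O[𝓝 0] fun _ => (1 : ℝ) := by
  have hcube : (fun τ : ℝ => τ ^ 3) =O[𝓝 0] fun _ => (1 : ℝ) :=
    (Continuous.tendsto (by fun_prop) 0).isBigO_one ℝ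
  simpa using (hf.trans hcube).add (quadratic_isBigO_one a₁ a₂)

lemma isBigO_sub (hf : HasSecondOrderExpansion f a₁ a₂) (hg : HasSecondOrderExpansion g a₁ a₂) :
    (fun τ => f τ - g τ) =O[𝓝 0] fun τ => τ ^ 3 := by
  simpa using hf.sub hg

lemma mul (hf : HasSecondOrderExpansion f a₁ a₂) (hg : HasSecondOrderExpansion g b₁ b₂) :
    HasSecondOrderExpansion (fun τ => f τ * g τ) (a₁ + b₁) (a₂ + a₁ * b₁ + b₂) := by
  set P : ℝ → 𝒜 := fun τ => 1 + τ • a₁ + τ ^ 2 • a₂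
  set Q : ℝ → 𝒜 := fun τ => 1 + τ • b₁ + τ ^ 2 • b₂
  set R : ℝ → 𝒜 := fun τ => 1 + τ • (a₁ + b₁) + τ ^ 2 • (a₂ + a₁ * b₁ + b₂)
  have hPQ : ∀ τ : ℝ, P τ * Q τ - R τ = τ ^ 3 • (a₁ * b₂ + a₂ * b₁ + τ • (a₂ * b₂)) := by
    intro τ
    simp only [P, Q, R, mul_add, add_mul, smul_mul_smul_comm, one_mul, mul_one, smul_add,
      smul_smul]
    module
  have hPQ_isBigO : (fun τ => P τ * Q τ - R τ) =O[𝓝 0] fun τ => τ ^ 3 := by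
    simp only [hPQ]
    simpa using (isBigO_refl (fun τ : ℝ => τ ^ 3) _).smul
      ((Continuous.tendsto (f := fun τ : ℝ => a₁ * b₂ + a₂ * b₁ + τ • (a₂ * b₂))
        (by fun_prop) 0).isBigO_one ℝ)
  have hsplit : ∀ τ : ℝ, f τ * g τ - R τ
      = (f τ - P τ) * g τ + P τ * (g τ - Q τ) + (P τ * Q τ - R τ) := by
    intro τ
    noncomm_ring
  show (fun τ => f τ * g τ - R τ) =O[𝓝 0] _
  simp only [hsplit]
  refine (IsBigO.add ?_ ?_).add hPQ_isBigO
  · simpa using IsBigO.mul hf hg.isBigO_one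
  · simpa using IsBigO.mul (quadratic_isBigO_one a₁ a₂) hg

end HasSecondOrderExpansion

lemma norm_exp_le_exp_norm [NormOneClass 𝒜] (x : 𝒜) : ‖exp x‖ ≤ Real.exp ‖x‖ := by
  rw [exp_eq_tsum ℝ, Real.exp_eq_exp_ℝ]
  refine tsum_of_norm_bounded (expSeries_div_hasSum_exp ‖x‖) fun n => ?_
  rw [norm_smul, norm_inv, Real.norm_natCast, div_eq_inv_mul]
  gcongr
  exact norm_pow_le x n

lemma norm_exp_smul_le [NormOneClass 𝒜] (x : 𝒜) {τ : ℝ} (hτ : 0 ≤ τ) :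
    ‖exp (τ • x)‖ ≤ Real.exp (τ * ‖x‖) := by
  simpa [norm_smul, abs_of_nonneg hτ] using norm_exp_le_exp_norm (τ • x)

noncomputable def strang (A B : 𝒜) (τ : ℝ) : 𝒜 :=
  exp ((τ / 2) • B) * exp (τ • A) * exp ((τ / 2) • B)

noncomputable def nestedLeapfrog (A B₁ B₂ : 𝒜) (h : ℝ) (M : ℕ) : 𝒜 :=
  exp ((h / 2) • B₂) * strang A B₁ (h / M) ^ M * exp ((h / 2) • B₂)

lemma norm_strang_le [NormOneClass 𝒜] (A B : 𝒜) {τ : ℝ} (hτ : 0 ≤ τ) :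
    ‖strang A B τ‖ ≤ Real.exp (τ * (‖A‖ + ‖B‖)) := by
  calc ‖strang A B τ‖
      ≤ Real.exp (τ / 2 * ‖B‖) * Real.exp (τ * ‖A‖) * Real.exp (τ / 2 * ‖B‖) := by
        refine (norm_mul₃_le ..).trans ?_
        gcongr <;> exact norm_exp_smul_le _ (by positivity)
    _ = Real.exp (τ * (‖A‖ + ‖B‖)) := by rw [← Real.exp_add, ← Real.exp_add]; ring_nf

section Complete

variable [CompleteSpace 𝒜]

lemma exp_smul_pow (x : 𝒜) (τ : ℝ) (n : ℕ) : exp (τ • x) ^ n = exp ((n * τ) • x) := by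
  let _ : NormedAlgebra ℚ 𝒜 := NormedAlgebra.restrictScalars ℚ ℝ 𝒜
  rw [← exp_nsmul, mul_smul, Nat.cast_smul_eq_nsmul]

lemma hasSecondOrderExpansion_exp_smul (x : 𝒜) :
    HasSecondOrderExpansion (fun τ => exp (τ • x)) x ((2 : ℝ)⁻¹ • (x * x)) := by
  have hsmul : Tendsto (fun τ : ℝ => τ • x) (𝓝 0) (𝓝 0) := by
    simpa using (Continuous.tendsto (f := fun τ : ℝ => τ • x) (by fun_prop) 0)
  have htaylor := ((exp_hasFPowerSeriesAt_zero (𝕂 := ℝ) (𝔸 := 𝒜)).isBigO_sub_partialSum_pow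
    3).comp_tendsto hsmul
  have hnorm : (fun τ : ℝ => ‖τ • x‖ ^ 3) =O[𝓝 0] fun τ => τ ^ 3 := by
    refine ((isBigO_refl (fun τ : ℝ => τ ^ 3) _).const_mul_left
      (‖x‖ ^ 3)).norm_left.congr_left fun τ => ?_
    simp [norm_smul, mul_pow, mul_comm]
  refine (htaylor.trans hnorm).congr_left fun τ => ?_
  simp [FormalMultilinearSeries.partialSum, Finset.sum_range_succ, expSeries_apply_eq,
    smul_smul, pow_two]
  module

lemma hasSecondOrderExpansion_strang (A B : 𝒜) :
    HasSecondOrderExpansion (strang A B) (A + B) ((2 : ℝ)⁻¹ • ((A + B) * (A + B))) := by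
  have hB := hasSecondOrderExpansion_exp_smul ((2 : ℝ)⁻¹ • B)
  convert (hB.mul (hasSecondOrderExpansion_exp_smul A)).mul hB using 1
  · funext τ
    simp only [strang, smul_smul, div_eq_mul_inv]
  · module
  · simp only [mul_add, add_mul, smul_add, smul_smul, mul_smul_comm,
      smul_mul_assoc]
    module

lemma strang_sub_exp_isBigO (A B : 𝒜) :
    (fun τ => strang A B τ - exp (τ • (A + B))) =O[𝓝 0] fun τ => τ ^ 3 :=
  (hasSecondOrderExpansion_strang A B).isBigO_sub (hasSecondOrderExpansion_exp_smul (A + B))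

lemma exists_norm_strang_sub_exp_le (A B : 𝒜) :
    ∃ c, ∀ τ ∈ Ioc (0 : ℝ) 1, ‖strang A B τ - exp (τ • (A + B))‖ ≤ c * τ ^ 3 := by
  have hcont : Continuous fun τ => strang A B τ - exp (τ • (A + B)) := by
    let _ : NormedAlgebra ℚ 𝒜 := NormedAlgebra.restrictScalars ℚ ℝ 𝒜
    unfold strang
    fun_prop
  obtain ⟨c, hc⟩ := isBigO_principal.1
    (isBigO_principal_Ioc_of_isBigO_nhds_zero hcont (strang_sub_exp_isBigO A B))
  exact ⟨c, fun τ hτ => by simpa [abs_of_pos hτ.1] using hc τ hτ⟩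

variable [NormOneClass 𝒜]

lemma exists_norm_strang_pow_sub_exp_le (A B : 𝒜) : ∃ C, ∀ h ∈ Ioc (0 : ℝ) 1, ∀ M : ℕ, 0 < M →
    ‖strang A B (h / M) ^ M - exp (h • (A + B))‖ ≤ C * h ^ 3 := by
  obtain ⟨c, hc⟩ := exists_norm_strang_sub_exp_le A B
  have hc₀ : 0 ≤ c := by simpa using (norm_nonneg _).trans (hc 1 (by simp))
  set L := ‖A‖ + ‖B‖
  refine ⟨c * Real.exp L, fun h ⟨h₀, h₁⟩ M hM => ?_⟩
  have hM₁ : (1 : ℝ) ≤ M := by exact_mod_cast hM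
  set τ := h / M
  have hτ : τ ∈ Ioc (0 : ℝ) 1 := ⟨by positivity, div_le_one_of_le₀ (h₁.trans hM₁) (by positivity)⟩
  have hMτ : M * τ = h := mul_div_cancel₀ h (by positivity)
  set K := Real.exp (τ * L)
  have hK : 1 ≤ K := Real.one_le_exp (by positivity)
  have hKM : K ^ M ≤ Real.exp L := by
    rw [← Real.exp_nat_mul, ← mul_assoc, hMτ]
    exact Real.exp_le_exp.2 (mul_le_of_le_one_left (by positivity) h₁)
  have hT : ‖exp (τ • (A + B))‖ ≤ K :=
    (norm_exp_smul_le _ hτ.1.le).trans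
      (Real.exp_le_exp.2 (mul_le_mul_of_nonneg_left (norm_add_le A B) hτ.1.le))
  rw [← hMτ, ← exp_smul_pow]
  calc ‖strang A B τ ^ M - exp (τ • (A + B)) ^ M‖
      ≤ M * K ^ M * ‖strang A B τ - exp (τ • (A + B))‖ :=
        norm_pow_sub_pow_le_s6 hK (norm_strang_le A B hτ.1.le) hT M
    _ ≤ M * K ^ M * (c * τ ^ 3) := by gcongr; exact hc τ hτ
    _ = c * K ^ M * ((M * τ) ^ 3 / M ^ 2) := by field_simp
    _ ≤ c * Real.exp L * (M * τ) ^ 3 := by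
        gcongr
        exact div_le_self (by positivity) (one_le_pow₀ hM₁)

lemma exists_norm_nestedLeapfrog_sub_exp_le (A B₁ B₂ : 𝒜) : ∃ C, ∀ h ∈ Ioc (0 : ℝ) 1, ∀ M : ℕ,
    0 < M → ‖nestedLeapfrog A B₁ B₂ h M - exp (h • (A + B₁ + B₂))‖ ≤ C * h ^ 3 := by
  obtain ⟨C₁, hC₁⟩ := exists_norm_strang_pow_sub_exp_le A B₁
  obtain ⟨c₂, hc₂⟩ := exists_norm_strang_sub_exp_le (A + B₁) B₂
  refine ⟨Real.exp ‖B₂‖ * C₁ * Real.exp ‖B₂‖ + c₂, fun h hh M hM => ?_⟩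
  set E := exp ((h / 2) • B₂)
  have hE : ‖E‖ ≤ Real.exp ‖B₂‖ := (norm_exp_smul_le B₂ (by linarith [hh.1])).trans
    (Real.exp_le_exp.2 (mul_le_of_le_one_left (norm_nonneg B₂) (by linarith [hh.2])))
  have hsplit : nestedLeapfrog A B₁ B₂ h M - exp (h • (A + B₁ + B₂))
      = E * (strang A B₁ (h / M) ^ M - exp (h • (A + B₁))) * E
        + (strang (A + B₁) B₂ h - exp (h • (A + B₁ + B₂))) := by
    simp only [nestedLeapfrog, strang, E, mul_sub, sub_mul]
    abel
  calc ‖nestedLeapfrog A B₁ B₂ h M - exp (h • (A + B₁ + B₂))‖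
      ≤ ‖E‖ * ‖E‖ * ‖strang A B₁ (h / M) ^ M - exp (h • (A + B₁))‖
        + ‖strang (A + B₁) B₂ h - exp (h • (A + B₁ + B₂))‖ := by
        rw [hsplit]
        exact (norm_add_le _ _).trans
          (add_le_add_left ((norm_mul₃_le ..).trans_eq (mul_right_comm ..)) _)
    _ ≤ Real.exp ‖B₂‖ * Real.exp ‖B₂‖ * (C₁ * h ^ 3) + c₂ * h ^ 3 := by
        gcongr
        exacts [hC₁ h hh M hM, hc₂ h hh]
    _ = (Real.exp ‖B₂‖ * C₁ * Real.exp ‖B₂‖ + c₂) * h ^ 3 := by ring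

end Complete

noncomputable def leftRegularRep : 𝒜 →ₐ[ℝ] 𝒜 →L[ℝ] 𝒜 :=
  { NonUnitalAlgHom.Lmul ℝ 𝒜 with
    map_one' := ContinuousLinearMap.ext one_mul
    commutes' := fun r => ContinuousLinearMap.ext fun x => by simp [Algebra.smul_def] }

lemma continuous_leftRegularRep : Continuous (leftRegularRep (𝒜 := 𝒜)) :=
  (ContinuousLinearMap.mul ℝ 𝒜).continuous

lemma norm_le_norm_one_mul_norm_leftRegularRep (x : 𝒜) :
    ‖x‖ ≤ ‖(1 : 𝒜)‖ * ‖leftRegularRep x‖ := by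
  calc ‖x‖ = ‖leftRegularRep x 1‖ := by simp [leftRegularRep]
    _ ≤ ‖(1 : 𝒜)‖ * ‖leftRegularRep x‖ := by rw [mul_comm]; exact (leftRegularRep x).le_opNorm 1

lemma map_exp_of_continuous [CompleteSpace 𝒜] {𝓑 : Type*} [NormedRing 𝓑] [NormedAlgebra ℝ 𝓑]
    (ψ : 𝒜 →ₐ[ℝ] 𝓑) (hψ : Continuous ψ) (x : 𝒜) : ψ (exp x) = exp (ψ x) :=
  let _ : NormedAlgebra ℚ 𝒜 := NormedAlgebra.restrictScalars ℚ ℝ 𝒜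
  let _ : NormedAlgebra ℚ 𝓑 := NormedAlgebra.restrictScalars ℚ ℝ 𝓑
  map_exp ψ hψ x

lemma map_nestedLeapfrog [CompleteSpace 𝒜] {𝓑 : Type*} [NormedRing 𝓑] [NormedAlgebra ℝ 𝓑]
    (ψ : 𝒜 →ₐ[ℝ] 𝓑) (hψ : Continuous ψ) (A B₁ B₂ : 𝒜) (h : ℝ) (M : ℕ) :
    ψ (nestedLeapfrog A B₁ B₂ h M) = nestedLeapfrog (ψ A) (ψ B₁) (ψ B₂) h M := by
  simp only [nestedLeapfrog, strang, map_mul, map_pow, map_exp_of_continuous ψ hψ, map_smul]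

end

/-- The nested (multirate) leap-frog scheme
`Δ̂(h) = exp((h/2)B₂)·(exp((h/(2M))B₁)·exp((h/M)A)·exp((h/(2M))B₁))^M·exp((h/2)B₂)`
is second-order accurate uniformly in the number `M` of inner steps. -/
theorem nested_leapfrog_uniform_second_order {𝒜 : Type*} [NormedRing 𝒜]
    [NormedAlgebra ℝ 𝒜] [CompleteSpace 𝒜] (A B₁ B₂ : 𝒜) :
    ∃ C : ℝ, ∀ h : ℝ, 0 < h → h ≤ 1 → ∀ M : ℕ, 0 < M →
      ‖exp ((h / 2) • B₂) *
            (exp ((h / (2 * (M : ℝ))) • B₁) * exp ((h / (M : ℝ)) • A) *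
              exp ((h / (2 * (M : ℝ))) • B₁)) ^ M *
            exp ((h / 2) • B₂)
          - exp (h • (A + B₁ + B₂))‖ ≤ C * h ^ 3 := by
  rcases subsingleton_or_nontrivial 𝒜 with h𝒜 | h𝒜
  · exact ⟨0, fun h _ _ M _ => by simp [Subsingleton.elim _ (0 : 𝒜)]⟩
  set ψ := leftRegularRep (𝒜 := 𝒜)
  obtain ⟨C, hC⟩ := exists_norm_nestedLeapfrog_sub_exp_le (ψ A) (ψ B₁) (ψ B₂)
  refine ⟨‖(1 : 𝒜)‖ * C, fun h h₀ h₁ M hM => ?_⟩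
  rw [show h / (2 * (M : ℝ)) = h / M / 2 by ring]
  calc ‖nestedLeapfrog A B₁ B₂ h M - exp (h • (A + B₁ + B₂))‖
      ≤ ‖(1 : 𝒜)‖ * ‖ψ (nestedLeapfrog A B₁ B₂ h M - exp (h • (A + B₁ + B₂)))‖ :=
        norm_le_norm_one_mul_norm_leftRegularRep _
    _ ≤ ‖(1 : 𝒜)‖ * (C * h ^ 3) := by
        rw [map_sub, map_nestedLeapfrog ψ continuous_leftRegularRep,
          map_exp_of_continuous ψ continuous_leftRegularRep, map_smul, map_add, map_add]
        gcongr
        exact hC h ⟨h₀, h₁⟩ M hM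
    _ = ‖(1 : 𝒜)‖ * C * h ^ 3 := by ring
end

section
/- Let ι be a finite index type, η : ι → ℂ a fixed vector, and D : ℝ → Matrix(ι,ι,ℂ) a differentiable matrix-valued function such that D(t) is invertible for every t. Define χ(t) = (D(t)ᴴ)⁻¹ η, ξ(t) = D(t)⁻¹ χ(t), and the pseudofermion action S(t) = ηᴴ (D(t)ᴴ D(t))⁻¹ η (a real number). Then S is differentiable and S′(t) = −2 Re( χ(t)ᴴ · D′(t) · ξ(t) ) for every t, where D′(t) is the entrywise derivative of D at t. -/
/-!
Differentiate `N = Dᴴ D` by the product rule and `N⁻¹` as a ring inverse, with derivative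
`-N⁻¹ N' N⁻¹`. For `N' = D'ᴴ D + Dᴴ D'` this sandwich is `X + Xᴴ` with `X = D⁻¹ D' D⁻¹ (Dᴴ)⁻¹`,
and `ηᴴ X η = χᴴ D' ξ`; the two halves contribute complex-conjugate numbers, whence `-2 Re`.
-/

open Matrix
-- A submultiplicative norm on square matrices, so that `Ring.inverse` can be differentiated.
open scoped Matrix.Norms.Operator

theorem HasDerivAt.ringInverse {𝕜 𝔸 : Type*} [NontriviallyNormedField 𝕜] [NormedRing 𝔸]
    [NormedAlgebra 𝕜 𝔸] [HasSummableGeomSeries 𝔸] {f : 𝕜 → 𝔸} {f' : 𝔸} {x : 𝕜}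
    (h : HasDerivAt f f' x) (hx : IsUnit (f x)) :
    HasDerivAt (fun y => Ring.inverse (f y))
      (-(Ring.inverse (f x) * f' * Ring.inverse (f x))) x := by
  obtain ⟨u, hu⟩ := hx
  have hinv := hasFDerivAt_ringInverse (𝕜 := 𝕜) u
  rw [hu] at hinv
  simpa [← hu, Function.comp_def] using hinv.comp_hasDerivAt x h

theorem Matrix.hasDerivAt_of_entries {𝕜 R m n : Type*} [NontriviallyNormedField 𝕜]
    [NormedRing R] [NormedAlgebra 𝕜 R] [Fintype m] [Fintype n] [DecidableEq m] [DecidableEq n]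
    {M : 𝕜 → Matrix m n R} {M' : Matrix m n R} {x : 𝕜}
    (h : ∀ i j, HasDerivAt (fun y => M y i j) (M' i j) x) : HasDerivAt M M' x := by
  rw [funext fun y => matrix_eq_sum_single (M y), matrix_eq_sum_single M']
  refine HasDerivAt.fun_sum fun i _ => HasDerivAt.fun_sum fun j _ => ?_
  simpa [smul_single] using (h i j).smul_const (single i j (1 : R))

section RCLike

variable {ι 𝕂 : Type*} [Fintype ι] [RCLike 𝕂]

theorem HasDerivAt.re_dotProduct_mulVec {m : Type*} [Fintype m] {M : ℝ → Matrix m ι 𝕂}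
    {M' : Matrix m ι 𝕂} {x : ℝ} (h : HasDerivAt M M' x) (u : m → 𝕂) (v : ι → 𝕂) :
    HasDerivAt (fun y => RCLike.re (u ⬝ᵥ (M y *ᵥ v))) (RCLike.re (u ⬝ᵥ (M' *ᵥ v))) x := by
  let L : Matrix m ι 𝕂 →ₗ[ℝ] ℝ :=
    { toFun := fun N => RCLike.re (u ⬝ᵥ (N *ᵥ v))
      map_add' := by simp [add_mulVec, dotProduct_add]
      map_smul' := by simp [smul_mulVec, dotProduct_smul, RCLike.smul_re] }
  exact (LinearMap.toContinuousLinearMap L).hasFDerivAt.comp_hasDerivAt x h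

namespace Matrix

theorem re_star_dotProduct_add_conjTranspose_mulVec (X : Matrix ι ι 𝕂) (v : ι → 𝕂) :
    RCLike.re (star v ⬝ᵥ ((Xᴴ + X) *ᵥ v)) = 2 * RCLike.re (star v ⬝ᵥ (X *ᵥ v)) := by
  rw [add_mulVec, dotProduct_add, map_add, dotProduct_mulVec, ← star_mulVec,
    star_dotProduct (X *ᵥ v), RCLike.star_def, RCLike.conj_re]
  ring

variable [DecidableEq ι]

theorem inv_conjTranspose_mul_self_sandwich {A : Matrix ι ι 𝕂} (hA : IsUnit A)
    (A' : Matrix ι ι 𝕂) :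
    (Aᴴ * A)⁻¹ * (A'ᴴ * A + Aᴴ * A') * (Aᴴ * A)⁻¹
      = (A⁻¹ * A' * A⁻¹ * (Aᴴ)⁻¹)ᴴ + A⁻¹ * A' * A⁻¹ * (Aᴴ)⁻¹ := by
  have hd : IsUnit A.det := (isUnit_iff_isUnit_det A).mp hA
  have hd' : IsUnit Aᴴ.det := (isUnit_iff_isUnit_det _).mp ((isUnit_conjTranspose A).mpr hA)
  simp only [mul_inv_rev, conjTranspose_mul, conjTranspose_nonsing_inv,
    conjTranspose_conjTranspose, Matrix.mul_add, Matrix.add_mul, Matrix.mul_assoc,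
    mul_nonsing_inv_cancel_left _ _ hd, nonsing_inv_mul_cancel_left _ _ hd']

theorem re_star_dotProduct_inv_conjTranspose_mul_self_sandwich {A : Matrix ι ι 𝕂}
    (hA : IsUnit A) (A' : Matrix ι ι 𝕂) (η : ι → 𝕂) :
    RCLike.re (star η ⬝ᵥ (((Aᴴ * A)⁻¹ * (A'ᴴ * A + Aᴴ * A') * (Aᴴ * A)⁻¹) *ᵥ η))
      = 2 * RCLike.re (star ((Aᴴ)⁻¹ *ᵥ η) ⬝ᵥ (A' *ᵥ (A⁻¹ *ᵥ ((Aᴴ)⁻¹ *ᵥ η)))) := by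
  rw [inv_conjTranspose_mul_self_sandwich hA, re_star_dotProduct_add_conjTranspose_mulVec,
    ← conjTranspose_conjTranspose A⁻¹, conjTranspose_nonsing_inv, Matrix.mul_assoc,
    Matrix.mul_assoc, ← mulVec_mulVec, dotProduct_mulVec, star_mulVec, ← mulVec_mulVec,
    ← mulVec_mulVec]

end Matrix

end RCLike

/-- The fermion force formula: for `S(t) = ηᴴ (D(t)ᴴ D(t))⁻¹ η` (a real number) with `D(t)`
invertible and entrywise differentiable, `S` is differentiable with
`S′(t) = −2 Re(χ(t)ᴴ · D′(t) · ξ(t))`, where `χ(t) = (D(t)ᴴ)⁻¹ η`, `ξ(t) = D(t)⁻¹ χ(t)` and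
`D′(t)` is the entrywise derivative. -/
theorem fermion_force {ι : Type*} [Fintype ι] [DecidableEq ι]
    (η : ι → ℂ) (D : ℝ → Matrix ι ι ℂ)
    (hD : ∀ i j, Differentiable ℝ fun t => D t i j)
    (hinv : ∀ t, IsUnit (D t)) (t : ℝ) :
    HasDerivAt (fun s => (star η ⬝ᵥ (((D s)ᴴ * D s)⁻¹ *ᵥ η)).re)
      (-2 * (star (((D t)ᴴ)⁻¹ *ᵥ η) ⬝ᵥ
          ((Matrix.of fun i j => deriv (fun s => D s i j) t) *ᵥ
            ((D t)⁻¹ *ᵥ (((D t)ᴴ)⁻¹ *ᵥ η)))).re) t := by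
  set D' : Matrix ι ι ℂ := Matrix.of fun i j => deriv (fun s => D s i j) t
  have hDt : HasDerivAt D D' t := hasDerivAt_of_entries fun i j => (hD i j t).hasDerivAt
  have hDHt : HasDerivAt (fun s => (D s)ᴴ) D'ᴴ t :=
    hasDerivAt_of_entries fun i j => (hD j i t).hasDerivAt.star
  have hN : HasDerivAt (fun s => (D s)ᴴ * D s) (D'ᴴ * D t + (D t)ᴴ * D') t := hDHt.mul hDt
  have hNt : IsUnit ((D t)ᴴ * D t) := ((isUnit_conjTranspose _).mpr (hinv t)).mul (hinv t)
  have hS := (hN.ringInverse hNt).re_dotProduct_mulVec (star η) η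
  simp only [← nonsing_inv_eq_ringInverse, neg_mulVec, dotProduct_neg, map_neg,
    re_star_dotProduct_inv_conjTranspose_mul_self_sandwich (hinv t)] at hS
  simpa only [RCLike.re_to_complex, neg_mul] using hS
end
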